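/- Let S' = K[x_1,...,x_{n-1}], S = S'[x_n], I ⊊ J monomial ideals of S', and T = (I + x_n·J)S. Then sdepth_S(T) ≥ min{sdepth_S(JS/IS), sdepth_S(IS)}. -/

import Mathlib

open MvPolynomial

/-- The set of exponent vectors of monomials in the Stanley space `aK[Z]`. -/
def stanleyCell {n : ℕ} (a : Fin n →₀ ℕ) (Z : Finset (Fin n)) : Set (Fin n →₀ ℕ) :=
  {b | (∀ i, a i ≤ b i) ∧ ∀ i, i ∉ Z → b i = a i}

/-- A Stanley decomposition of a set `M` of exponent vectors: a finite family of
Stanley spaces whose monomial sets partition `M`. -/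
def IsStanleyDecomp {n : ℕ} (M : Set (Fin n →₀ ℕ))
    (D : Finset ((Fin n →₀ ℕ) × Finset (Fin n))) : Prop :=
  (∀ p ∈ D, stanleyCell p.1 p.2 ⊆ M) ∧
    ∀ b ∈ M, ∃! p : (Fin n →₀ ℕ) × Finset (Fin n), p ∈ D ∧ b ∈ stanleyCell p.1 p.2

/-- Stanley depth of a set of exponent vectors. -/
noncomputable def sdepthSet {n : ℕ} (M : Set (Fin n →₀ ℕ)) : ℕ :=
  sSup {k | ∃ D, IsStanleyDecomp M D ∧ ∀ p ∈ D, k ≤ p.2.card}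

/-- The set of exponent vectors of monomials belonging to an ideal. -/
def monoSet {K : Type} [Field K] {n : ℕ} (I : Ideal (MvPolynomial (Fin n) K)) :
    Set (Fin n →₀ ℕ) := {d | (monomial d (1 : K)) ∈ I}

/-- Stanley depth of a monomial ideal. -/
noncomputable def sdepthIdeal {K : Type} [Field K] {n : ℕ}
    (I : Ideal (MvPolynomial (Fin n) K)) : ℕ := sdepthSet (monoSet I)

/-- Stanley depth of the quotient `J/I` of monomial ideals. -/
noncomputable def sdepthQuot {K : Type} [Field K] {n : ℕ}
    (I J : Ideal (MvPolynomial (Fin n) K)) : ℕ := sdepthSet (monoSet J \ monoSet I)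

/-- Depth of a module with respect to an ideal `m`: the supremum of lengths of
regular sequences on `M` consisting of elements of `m`. -/
noncomputable def mdepth {R : Type} [CommRing R] (m : Ideal R)
    (M : Type) [AddCommGroup M] [Module R M] : ℕ :=
  sSup {k | ∃ rs : List R, rs.length = k ∧ (∀ r ∈ rs, r ∈ m) ∧
    RingTheory.Sequence.IsRegular M rs}

/-- The maximal graded ideal `(x_1, ..., x_n)`. -/
noncomputable def maxIdeal (K : Type) [Field K] (n : ℕ) : Ideal (MvPolynomial (Fin n) K) :=
  Ideal.span (Set.range X)

/-- `J/I` as a module. -/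
abbrev idealQuot {R : Type} [CommRing R] (I J : Ideal R) :=
  ↥J ⧸ (Submodule.comap J.subtype I)

/-- A monomial ideal: generated by monomials. -/
def IsMonomialIdeal {K : Type} [Field K] {n : ℕ}
    (I : Ideal (MvPolynomial (Fin n) K)) : Prop :=
  ∃ G : Set (Fin n →₀ ℕ), I = Ideal.span ((fun d => (monomial d (1 : K))) '' G)

/-- A squarefree monomial ideal: generated by squarefree monomials. -/
def IsSqfreeMonomialIdeal {K : Type} [Field K] {n : ℕ}
    (I : Ideal (MvPolynomial (Fin n) K)) : Prop :=
  ∃ G : Set (Fin n →₀ ℕ), (∀ d ∈ G, ∀ i, d i ≤ 1) ∧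
    I = Ideal.span ((fun d => (monomial d (1 : K))) '' G)

/-- The inclusion `K[x_1,...,x_{n-1}] → K[x_1,...,x_n]`. -/
noncomputable def extMap (K : Type) [Field K] (n : ℕ) :
    MvPolynomial (Fin n) K →+* MvPolynomial (Fin (n + 1)) K :=
  (rename (Fin.castSucc) : MvPolynomial (Fin n) K →ₐ[K] MvPolynomial (Fin (n + 1)) K).toRingHom

/-- Krull dimension of a module: dimension of `R / ann M`. -/
noncomputable def mdim (R : Type) [CommRing R]
    (M : Type) [AddCommGroup M] [Module R M] : WithBot (WithTop ℕ) :=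
  ringKrullDim (R ⧸ Module.annihilator R M)

/-! Specialising `x_n` to `1` fixes `S'` and hence every extended ideal `IS`, so the monomial set
of `IS` is stable under multiplying and dividing by `x_n`; specialising `x_n` to `0` shows that
a monomial of `T` not divisible by `x_n` lies in `IS`. Hence the monomials of `T` are the disjoint
union of those of `IS` and `x_n` times those of `JS \ IS`. Translating a Stanley decomposition
of `JS / IS` by `x_n` and adding one of `IS` gives a Stanley decomposition of `T`. -/

section Stanley

variable {n : ℕ}

theorem stanleyCell_add (a v : Fin n →₀ ℕ) (Z : Finset (Fin n)) :
    stanleyCell (a + v) Z = (· + v) '' stanleyCell a Z := by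
  ext b
  simp only [stanleyCell, Set.mem_image, Set.mem_ofPred_eq, Finsupp.add_apply]
  constructor
  · rintro ⟨hle, hZ⟩
    refine ⟨b - v, ⟨fun i => ?_, fun i hi => ?_⟩, ?_⟩
    · have := hle i; simp only [Finsupp.tsub_apply]; omega
    · have := hZ i hi; simp only [Finsupp.tsub_apply]; omega
    · ext i; have := hle i; simp only [Finsupp.add_apply, Finsupp.tsub_apply]; omega
  · rintro ⟨c, ⟨hle, hZ⟩, rfl⟩
    exact ⟨fun i => by simp only [Finsupp.add_apply]; have := hle i; omega,
      fun i hi => by simp only [Finsupp.add_apply, hZ i hi]⟩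

namespace IsStanleyDecomp

theorem union {M₁ M₂ : Set (Fin n →₀ ℕ)}
    {D₁ D₂ : Finset ((Fin n →₀ ℕ) × Finset (Fin n))} (h₁ : IsStanleyDecomp M₁ D₁)
    (h₂ : IsStanleyDecomp M₂ D₂) (hM : Disjoint M₁ M₂) :
    IsStanleyDecomp (M₁ ∪ M₂) (D₁ ∪ D₂) := by
  refine ⟨fun p hp => ?_, fun b hb => ?_⟩
  · rcases Finset.mem_union.1 hp with hp | hp
    · exact (h₁.1 p hp).trans Set.subset_union_left
    · exact (h₂.1 p hp).trans Set.subset_union_right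
  · have unique_of {M M' : Set (Fin n →₀ ℕ)} {D D'} (h : IsStanleyDecomp M D)
        (h' : IsStanleyDecomp M' D') (hb : b ∈ M) (hb' : b ∉ M') :
        ∃! p, p ∈ D ∪ D' ∧ b ∈ stanleyCell p.1 p.2 := by
      obtain ⟨p, ⟨hpD, hbp⟩, hp⟩ := h.2 b hb
      refine ⟨p, ⟨Finset.mem_union_left _ hpD, hbp⟩, fun q ⟨hqD, hbq⟩ => ?_⟩
      rcases Finset.mem_union.1 hqD with hqD | hqD
      · exact hp q ⟨hqD, hbq⟩
      · exact absurd (h'.1 q hqD hbq) hb'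
    rcases hb with hb | hb
    · exact unique_of h₁ h₂ hb (Set.disjoint_left.1 hM hb)
    · simpa only [Finset.union_comm] using unique_of h₂ h₁ hb (Set.disjoint_right.1 hM hb)

theorem image_add {M : Set (Fin n →₀ ℕ)} {D : Finset ((Fin n →₀ ℕ) × Finset (Fin n))}
    (h : IsStanleyDecomp M D) (v : Fin n →₀ ℕ) :
    IsStanleyDecomp ((· + v) '' M) (D.image fun p => (p.1 + v, p.2)) := by
  have hinj : Function.Injective (· + v : (Fin n →₀ ℕ) → _) := add_left_injective v
  refine ⟨?_, ?_⟩
  · simp only [Finset.forall_mem_image, stanleyCell_add]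
    exact fun p hp => Set.image_mono (h.1 p hp)
  · rintro _ ⟨b, hb, rfl⟩
    obtain ⟨p, ⟨hpD, hbp⟩, hp⟩ := h.2 b hb
    refine ⟨(p.1 + v, p.2), ⟨Finset.mem_image_of_mem _ hpD, ?_⟩, ?_⟩
    · rw [stanleyCell_add]; exact Set.mem_image_of_mem _ hbp
    · rintro _ ⟨hqD, hbq⟩
      obtain ⟨q, hq, rfl⟩ := Finset.mem_image.1 hqD
      rw [stanleyCell_add, hinj.mem_set_image] at hbq
      rw [hp q ⟨hq, hbq⟩]

end IsStanleyDecomp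

theorem sdepthSet_empty : sdepthSet (∅ : Set (Fin n →₀ ℕ)) = 0 := by
  have hempty : IsStanleyDecomp (∅ : Set (Fin n →₀ ℕ)) ∅ := by simp [IsStanleyDecomp]
  have hunbdd : ¬BddAbove {k | ∃ D, IsStanleyDecomp (∅ : Set (Fin n →₀ ℕ)) D ∧
      ∀ p ∈ D, k ≤ p.2.card} :=
    not_bddAbove_iff.2 fun k => ⟨k + 1, ⟨∅, hempty, by simp⟩, k.lt_succ_self⟩
  rw [sdepthSet, csSup_of_not_bddAbove hunbdd, csSup_empty, Nat.bot_eq_zero]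

theorem nonempty_of_sdepthSet_pos {M : Set (Fin n →₀ ℕ)} (h : 0 < sdepthSet M) :
    M.Nonempty := by
  rw [Set.nonempty_iff_ne_empty]
  rintro rfl
  exact h.ne' sdepthSet_empty

theorem bddAbove_setOf_isStanleyDecomp_le_card {M : Set (Fin n →₀ ℕ)} (hM : M.Nonempty) :
    BddAbove {k | ∃ D, IsStanleyDecomp M D ∧ ∀ p ∈ D, k ≤ p.2.card} := by
  refine ⟨n, ?_⟩
  rintro k ⟨D, hD, hk⟩
  obtain ⟨b, hb⟩ := hM
  obtain ⟨p, ⟨hpD, -⟩, -⟩ := hD.2 b hb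
  simpa using (hk p hpD).trans (Finset.card_le_univ p.2)

theorem le_sdepthSet {M : Set (Fin n →₀ ℕ)} (hM : M.Nonempty) {D} (hD : IsStanleyDecomp M D)
    {k : ℕ} (hk : ∀ p ∈ D, k ≤ p.2.card) : k ≤ sdepthSet M :=
  le_csSup (bddAbove_setOf_isStanleyDecomp_le_card hM) ⟨D, hD, hk⟩

theorem exists_isStanleyDecomp_of_sdepthSet_pos {M : Set (Fin n →₀ ℕ)} (h : 0 < sdepthSet M) :
    ∃ D, IsStanleyDecomp M D ∧ ∀ p ∈ D, sdepthSet M ≤ p.2.card := by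
  refine Nat.sSup_mem (Set.nonempty_iff_ne_empty.2 fun hempty => h.ne' ?_)
    (bddAbove_setOf_isStanleyDecomp_le_card (nonempty_of_sdepthSet_pos h))
  rw [sdepthSet, hempty, csSup_empty, Nat.bot_eq_zero]

theorem sdepthSet_le_sdepthSet_image_add (M : Set (Fin n →₀ ℕ)) (v : Fin n →₀ ℕ) :
    sdepthSet M ≤ sdepthSet ((· + v) '' M) := by
  rcases (sdepthSet M).eq_zero_or_pos with h | h
  · exact h.le.trans (Nat.zero_le _)
  obtain ⟨D, hD, hk⟩ := exists_isStanleyDecomp_of_sdepthSet_pos h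
  exact le_sdepthSet ((nonempty_of_sdepthSet_pos h).image _) (hD.image_add v)
    (Finset.forall_mem_image.2 hk)

theorem min_sdepthSet_le_sdepthSet_union {M₁ M₂ : Set (Fin n →₀ ℕ)} (hM : Disjoint M₁ M₂) :
    min (sdepthSet M₁) (sdepthSet M₂) ≤ sdepthSet (M₁ ∪ M₂) := by
  rcases (min (sdepthSet M₁) (sdepthSet M₂)).eq_zero_or_pos with h | h
  · exact h.le.trans (Nat.zero_le _)
  obtain ⟨h₁, h₂⟩ := lt_min_iff.1 h
  obtain ⟨D₁, hD₁, hk₁⟩ := exists_isStanleyDecomp_of_sdepthSet_pos h₁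
  obtain ⟨D₂, hD₂, hk₂⟩ := exists_isStanleyDecomp_of_sdepthSet_pos h₂
  refine le_sdepthSet ((nonempty_of_sdepthSet_pos h₁).mono Set.subset_union_left)
    (hD₁.union hD₂ hM) fun p hp => ?_
  rcases Finset.mem_union.1 hp with hp | hp
  · exact (min_le_left _ _).trans (hk₁ p hp)
  · exact (min_le_right _ _).trans (hk₂ p hp)

end Stanley

section Extension

variable {K : Type} [Field K] {n : ℕ}

noncomputable def evalLast (c : K) :
    MvPolynomial (Fin (n + 1)) K →ₐ[K] MvPolynomial (Fin (n + 1)) K :=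
  aeval (Fin.lastCases (C c) fun i => X i.castSucc)

theorem evalLast_comp_extMap (c : K) :
    (evalLast (n := n) c).toRingHom.comp (extMap K n) = extMap K n := by
  ext <;> simp [evalLast, extMap]

theorem evalLast_monomial (c : K) (b : Fin (n + 1) →₀ ℕ) :
    evalLast c (monomial b (1 : K)) =
      C c ^ b (Fin.last n) * monomial (b.erase (Fin.last n)) 1 := by
  rw [evalLast, aeval_monomial, map_one, one_mul,
    ← Finsupp.mul_prod_erase' b (Fin.last n) _ fun _ => pow_zero _, Fin.lastCases_last,
    monomial_eq, C_1, one_mul]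
  congr 1
  refine Finsupp.prod_congr fun i hi => ?_
  rw [Finsupp.support_erase] at hi
  obtain ⟨j, rfl⟩ := Fin.exists_castSucc_eq.2 (Finset.ne_of_mem_erase hi)
  rw [Fin.lastCases_castSucc]

theorem evalLast_X_last (c : K) : evalLast c (X (Fin.last n)) = C c := by
  rw [evalLast, aeval_X, Fin.lastCases_last]

theorem monomial_eq_X_last_pow_mul (b : Fin (n + 1) →₀ ℕ) :
    monomial b (1 : K) =
      X (Fin.last n) ^ b (Fin.last n) * monomial (b.erase (Fin.last n)) 1 := by
  rw [X_pow_eq_monomial, monomial_mul, one_mul, Finsupp.single_add_erase]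

variable (I J : Ideal (MvPolynomial (Fin n) K))

theorem evalLast_mem_map_extMap (c : K) {x : MvPolynomial (Fin (n + 1)) K}
    (hx : x ∈ I.map (extMap K n)) : evalLast c x ∈ I.map (extMap K n) := by
  have := Ideal.mem_map_of_mem (evalLast c).toRingHom hx
  rwa [Ideal.map_map, evalLast_comp_extMap] at this

theorem monomial_mem_map_extMap_iff (b : Fin (n + 1) →₀ ℕ) :
    monomial b (1 : K) ∈ I.map (extMap K n) ↔
      monomial (b.erase (Fin.last n)) (1 : K) ∈ I.map (extMap K n) := by
  refine ⟨fun h => ?_, fun h => ?_⟩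
  · simpa [evalLast_monomial] using evalLast_mem_map_extMap I 1 h
  · rw [monomial_eq_X_last_pow_mul]
    exact Ideal.mul_mem_left _ _ h

theorem add_single_last_mem_monoSet_map_extMap_iff (b : Fin (n + 1) →₀ ℕ) :
    b + Finsupp.single (Fin.last n) 1 ∈ monoSet (I.map (extMap K n)) ↔
      b ∈ monoSet (I.map (extMap K n)) := by
  simp only [monoSet, Set.mem_ofPred_eq]
  rw [monomial_mem_map_extMap_iff, monomial_mem_map_extMap_iff _ b, Finsupp.erase_add,
    Finsupp.erase_single, add_zero]

theorem evalLast_zero_mem_map_extMap {J' : Ideal (MvPolynomial (Fin (n + 1)) K)}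
    {x : MvPolynomial (Fin (n + 1)) K}
    (hx : x ∈ I.map (extMap K n) ⊔ Ideal.span {X (Fin.last n)} * J') :
    evalLast (0 : K) x ∈ I.map (extMap K n) := by
  obtain ⟨y, hy, z, hz, rfl⟩ := Submodule.mem_sup.1 hx
  obtain ⟨a, rfl⟩ := Ideal.mem_span_singleton'.1 (Ideal.mul_le_left hz)
  rw [map_add, map_mul, evalLast_X_last, C_0, mul_zero, add_zero]
  exact evalLast_mem_map_extMap I 0 hy

variable {I J} in
theorem monoSet_map_extMap_sup_mul (hIJ : I ≤ J) :
    monoSet (I.map (extMap K n) ⊔ Ideal.span {X (Fin.last n)} * J.map (extMap K n)) =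
      monoSet (I.map (extMap K n)) ∪ (· + Finsupp.single (Fin.last n) 1) ''
        (monoSet (J.map (extMap K n)) \ monoSet (I.map (extMap K n))) := by
  ext b
  constructor
  · intro hb
    by_cases hbI : b ∈ monoSet (I.map (extMap K n))
    · exact Or.inl hbI
    have hlast : b (Fin.last n) ≠ 0 := fun h0 => hbI <| (monomial_mem_map_extMap_iff I b).2 <| by
      simpa [evalLast_monomial, h0] using evalLast_zero_mem_map_extMap I hb
    have hb_eq : b - Finsupp.single (Fin.last n) 1 + Finsupp.single (Fin.last n) 1 = b :=
      tsub_add_cancel_of_le (Finsupp.single_le_iff.2 (Nat.one_le_iff_ne_zero.2 hlast))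
    have hbJ : b ∈ monoSet (J.map (extMap K n)) :=
      (sup_le (Ideal.map_mono hIJ) Ideal.mul_le_right : _ ≤ J.map (extMap K n)) hb
    refine Or.inr ⟨b - Finsupp.single (Fin.last n) 1, ⟨?_, ?_⟩, hb_eq⟩ <;>
      rwa [← add_single_last_mem_monoSet_map_extMap_iff, hb_eq]
  · rintro (hb | ⟨c, ⟨hcJ, -⟩, rfl⟩)
    · exact Ideal.mem_sup_left hb
    · refine Ideal.mem_sup_right ?_
      have hmul : monomial (c + Finsupp.single (Fin.last n) 1) (1 : K) =
          X (Fin.last n) * monomial c 1 := by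
        rw [monomial_add_single, pow_one, mul_comm]
      change monomial _ (1 : K) ∈ _
      rw [hmul]
      exact Ideal.mul_mem_mul (Ideal.mem_span_singleton_self _) hcJ

theorem disjoint_monoSet_map_extMap_image_add_single_last (M : Set (Fin (n + 1) →₀ ℕ)) :
    Disjoint (monoSet (I.map (extMap K n)))
      ((· + Finsupp.single (Fin.last n) 1) '' (M \ monoSet (I.map (extMap K n)))) := by
  rw [Set.disjoint_left]
  rintro _ hb ⟨c, ⟨-, hcI⟩, rfl⟩
  exact hcI ((add_single_last_mem_monoSet_map_extMap_iff I c).1 hb)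

end Extension

theorem sdepth_T_ge_min_JSmodIS_IS_general {K : Type} [Field K] {n : ℕ}
    (I J : Ideal (MvPolynomial (Fin n) K))
    (hIJ : I < J) :
    sdepthIdeal (Ideal.map (extMap K n) I ⊔
        Ideal.span {X (Fin.last n)} * Ideal.map (extMap K n) J) ≥
      min (sdepthQuot (Ideal.map (extMap K n) I) (Ideal.map (extMap K n) J))
        (sdepthIdeal (Ideal.map (extMap K n) I)) := by
  rw [ge_iff_le, sdepthIdeal, sdepthIdeal, sdepthQuot, monoSet_map_extMap_sup_mul hIJ.le,
    min_comm]
  calc _ ≤ min (sdepthSet (monoSet (I.map (extMap K n))))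
          (sdepthSet ((· + Finsupp.single (Fin.last n) 1) ''
            (monoSet (J.map (extMap K n)) \ monoSet (I.map (extMap K n))))) :=
        min_le_min_left _ (sdepthSet_le_sdepthSet_image_add _ _)
    _ ≤ _ := min_sdepthSet_le_sdepthSet_union
        (disjoint_monoSet_map_extMap_image_add_single_last I _)

theorem sdepth_T_ge_min_JSmodIS_IS {K : Type} [Field K] {n : ℕ}
    (I J : Ideal (MvPolynomial (Fin n) K))
    (hI : IsMonomialIdeal I) (hJ : IsMonomialIdeal J) (hIJ : I < J) :
    sdepthIdeal (Ideal.map (extMap K n) I ⊔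
        Ideal.span {X (Fin.last n)} * Ideal.map (extMap K n) J) ≥
      min (sdepthQuot (Ideal.map (extMap K n) I) (Ideal.map (extMap K n) J))
        (sdepthIdeal (Ideal.map (extMap K n) I)) :=
  sdepth_T_ge_min_JSmodIS_IS_general I J hIJ
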